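/- arXiv:1108.0554 — 3 statements merged into one kernel-verified Lean document; each statement's English description precedes it below -/
import Mathlib

section
/- In a rooted tree with n nodes, if we select every g-th leaf boundary as follows — group the leaves from left to right into blocks of g consecutive leaves, mark the lowest common ancestor (LCA) of each block, and then additionally mark the LCA of every pair of marked nodes (closing the marked set under pairwise LCA) — then the total number of marked nodes is O(n/g); more precisely, at most 2⌈L/g⌉ − 1 nodes are marked, where L ≤ n is the number of leaves. -/
/-- A finite rooted tree, given by a parent function, a depth function and an LCA
operation satisfying the usual specifications.  `parent root = root`, and every node
reaches the root by iterating `parent` (guaranteed by the depth axioms). -/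
structure RTree (V : Type*) where
  root : V
  parent : V → V
  lca : V → V → V
  depth : V → ℕ
  parent_root : parent root = root
  depth_eq_zero_iff : ∀ v, depth v = 0 ↔ v = root
  depth_parent : ∀ v, v ≠ root → depth (parent v) + 1 = depth v
  lca_anc_left : ∀ u v, ∃ k, parent^[k] u = lca u v
  lca_anc_right : ∀ u v, ∃ k, parent^[k] v = lca u v
  lca_greatest : ∀ u v w, (∃ k, parent^[k] u = w) → (∃ k, parent^[k] v = w) →
    ∃ k, parent^[k] (lca u v) = w

namespace RTree

variable {V : Type*} (T : RTree V)

/-- `u` is an ancestor of `v` (possibly `u = v`). -/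
def Anc (u v : V) : Prop := ∃ k, T.parent^[k] v = u

/-- `u` is a proper (strict) ancestor of `v`. -/
def ProperAnc (u v : V) : Prop := T.Anc u v ∧ u ≠ v

/-- `c` is a child of `u`. -/
def IsChild (c u : V) : Prop := T.parent c = u ∧ c ≠ u

/-- A leaf is a node without children. -/
def IsLeaf (v : V) : Prop := ∀ c, ¬ T.IsChild c v

end RTree

/-- The LCA-closure of a set of nodes: the smallest superset closed under pairwise LCA. -/
def lcaClosure {V : Type*} (T : RTree V) (S : Set V) : Set V :=
  ⋂₀ {C : Set V | S ⊆ C ∧ ∀ a ∈ C, ∀ b ∈ C, T.lca a b ∈ C}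

/-- The LCA of a nonempty list of nodes, computed by folding pairwise LCAs
(returns the root on the empty list). -/
def listLCA {V : Type*} (T : RTree V) : List V → V
  | [] => T.root
  | x :: xs => xs.foldl T.lca x

namespace MyAux

open RTree

variable {V : Type*} (T : RTree V)

lemma anc_refl (v : V) : T.Anc v v := ⟨0, rfl⟩

lemma anc_trans {u v w : V} (h1 : T.Anc u v) (h2 : T.Anc v w) : T.Anc u w := by
  obtain ⟨k, hk⟩ := h1; obtain ⟨j, hj⟩ := h2
  exact ⟨k + j, by rw [Function.iterate_add_apply, hj, hk]⟩

lemma anc_lca_left (u v : V) : T.Anc (T.lca u v) u := T.lca_anc_left u v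
lemma anc_lca_right (u v : V) : T.Anc (T.lca u v) v := T.lca_anc_right u v
lemma anc_lca_greatest {u v w : V} (h1 : T.Anc w u) (h2 : T.Anc w v) :
    T.Anc w (T.lca u v) := T.lca_greatest u v w h1 h2

lemma depth_parent_le (v : V) : T.depth (T.parent v) ≤ T.depth v := by
  by_cases h : v = T.root
  · subst h; rw [T.parent_root]
  · have := T.depth_parent v h; omega

lemma depth_anc_le {u v : V} (h : T.Anc u v) : T.depth u ≤ T.depth v := by
  obtain ⟨k, hk⟩ := h
  subst hk
  induction k with
  | zero => simp
  | succ n ih =>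
    rw [Function.iterate_succ_apply']
    exact le_trans (depth_parent_le T _) ih

lemma anc_eq_of_depth_le {u v : V} (h : T.Anc u v) (hd : T.depth v ≤ T.depth u) : u = v := by
  obtain ⟨k, hk⟩ := h
  subst hk
  induction k with
  | zero => rfl
  | succ n ih =>
    rw [Function.iterate_succ_apply'] at hd ⊢
    set w := T.parent^[n] v with hw
    by_cases hr : w = T.root
    · have h0 : T.depth v = 0 := by
        have h1 := (T.depth_eq_zero_iff T.root).mpr rfl
        rw [hr, T.parent_root] at hd
        omega
      have hv : v = T.root := (T.depth_eq_zero_iff v).mp h0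
      rw [hr, T.parent_root, hv]
    · have h1 := T.depth_parent w hr
      have h2 : T.depth w ≤ T.depth v := depth_anc_le T ⟨n, rfl⟩
      omega

lemma anc_antisymm {u v : V} (h1 : T.Anc u v) (h2 : T.Anc v u) : u = v :=
  anc_eq_of_depth_le T h1 (depth_anc_le T h2)

lemma anc_comparable {a b v : V} (h1 : T.Anc a v) (h2 : T.Anc b v) :
    T.Anc a b ∨ T.Anc b a := by
  obtain ⟨i, hi⟩ := h1; obtain ⟨j, hj⟩ := h2
  rcases le_total i j with h | h
  · right
    refine ⟨j - i, ?_⟩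
    rw [← hi, ← Function.iterate_add_apply, Nat.sub_add_cancel h, hj]
  · left
    refine ⟨i - j, ?_⟩
    rw [← hj, ← Function.iterate_add_apply, Nat.sub_add_cancel h, hi]

lemma lca_comm (u v : V) : T.lca u v = T.lca v u :=
  anc_antisymm T
    (anc_lca_greatest T (anc_lca_right T u v) (anc_lca_left T u v))
    (anc_lca_greatest T (anc_lca_right T v u) (anc_lca_left T v u))

lemma lca_eq_left {u v : V} (h : T.Anc u v) : T.lca u v = u :=
  anc_antisymm T (anc_lca_left T u v) (anc_lca_greatest T (anc_refl T u) h)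

lemma lca_self (v : V) : T.lca v v = v := lca_eq_left T (anc_refl T v)

/-- A set is lca-closed. -/
def Closed (S : Set V) : Prop := ∀ a ∈ S, ∀ b ∈ S, T.lca a b ∈ S

lemma subset_lcaClosure (S : Set V) : S ⊆ lcaClosure T S := by
  intro x hx C hC
  exact hC.1 hx

lemma lcaClosure_closed (S : Set V) : Closed T (lcaClosure T S) := by
  intro a ha b hb C hC
  exact hC.2 a (ha C hC) b (hb C hC)

lemma lcaClosure_min {S C : Set V} (h1 : S ⊆ C) (h2 : Closed T C) :
    lcaClosure T S ⊆ C := fun _x hx => hx C ⟨h1, h2⟩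

/-- The key step: if `w` is an ancestor of `m = lca a x₀` and of `c`, and `w` is
above every common "m-like" ancestor, then `w` is `m` or `lca x₀ c`. -/
lemma helper {m x₀ c w : V} (hmx : T.Anc m x₀) (hwm : T.Anc w m) (hwc : T.Anc w c)
    (hwgr : ∀ z, T.Anc z m → T.Anc z c → T.Anc z w) :
    w = m ∨ w = T.lca x₀ c := by
  set d := T.lca x₀ c with hd
  have hdx : T.Anc d x₀ := anc_lca_left T x₀ c
  have hdc : T.Anc d c := anc_lca_right T x₀ c
  have hwx : T.Anc w x₀ := anc_trans T hwm hmx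
  have hwd : T.Anc w d := anc_lca_greatest T hwx hwc
  rcases anc_comparable T hdx hmx with h | h
  · -- d anc of m
    right
    exact anc_antisymm T hwd (hwgr d h hdc)
  · -- m anc of d
    left
    have hmc : T.Anc m c := anc_trans T h hdc
    exact anc_antisymm T hwm (hwgr m (anc_refl T m) hmc)

end MyAux

namespace MyAux

variable {V : Type*} [Finite V] (T : RTree V)

lemma closure_ncard_finset (s : Finset V) (hs : s.Nonempty) :
    (lcaClosure T ↑s).ncard ≤ 2 * s.card - 1 := by
  classical
  induction hs using Finset.Nonempty.cons_induction with
  | singleton a =>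
    have hsub : lcaClosure T ↑({a} : Finset V) ⊆ {a} := by
      apply lcaClosure_min T (by simp)
      intro x hx y hy
      rw [Set.mem_singleton_iff] at hx hy
      rw [hx, hy, lca_self T a]
      exact Set.mem_singleton a
    calc (lcaClosure T ↑({a} : Finset V)).ncard ≤ ({a} : Set V).ncard :=
          Set.ncard_le_ncard hsub (Set.toFinite _)
      _ = 1 := Set.ncard_singleton a
      _ ≤ 2 * ({a} : Finset V).card - 1 := by simp
  | cons a s ha hs ih =>
    set Cs := lcaClosure T ↑s with hCs
    have hCsfin : Cs.Finite := Set.toFinite _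
    have hCsne : Cs.Nonempty := by
      obtain ⟨x, hx⟩ := hs
      exact ⟨x, subset_lcaClosure T _ (by exact_mod_cast hx)⟩
    obtain ⟨x₀, hx₀F, hmax⟩ := hCsfin.toFinset.exists_max_image
      (fun x => T.depth (T.lca a x)) (by simpa using hCsne)
    have hx₀ : x₀ ∈ Cs := hCsfin.mem_toFinset.mp hx₀F
    set m := T.lca a x₀ with hm
    have hma : T.Anc m a := anc_lca_left T a x₀
    have hmx : T.Anc m x₀ := anc_lca_right T a x₀
    have haA : ∀ c ∈ Cs, T.lca a c ∈ insert m Cs := by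
      intro c hc
      have hwa : T.Anc (T.lca a c) a := anc_lca_left T a c
      have hwc : T.Anc (T.lca a c) c := anc_lca_right T a c
      rcases anc_comparable T hwa hma with hwm | hmw
      · rcases helper T hmx hwm hwc
          (fun z hzm hzc => anc_lca_greatest T (anc_trans T hzm hma) hzc) with h | h
        · rw [h]; exact Set.mem_insert m Cs
        · rw [h]; exact Set.mem_insert_of_mem m (lcaClosure_closed T _ x₀ hx₀ c hc)
      · have hd : T.depth (T.lca a c) ≤ T.depth m := hmax c (hCsfin.mem_toFinset.mpr hc)
        have h : m = T.lca a c := anc_eq_of_depth_le T hmw hd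
        rw [← h]; exact Set.mem_insert m Cs
    have haB : ∀ c ∈ Cs, T.lca m c ∈ insert m Cs := by
      intro c hc
      rcases helper T hmx (anc_lca_left T m c) (anc_lca_right T m c)
        (fun z hzm hzc => anc_lca_greatest T hzm hzc) with h | h
      · rw [h]; exact Set.mem_insert m Cs
      · rw [h]; exact Set.mem_insert_of_mem m (lcaClosure_closed T _ x₀ hx₀ c hc)
    set K := insert a (insert m Cs) with hK
    have hKclosed : Closed T K := by
      have step : ∀ u ∈ insert m Cs, T.lca a u ∈ K := by
        intro u hu
        rcases Set.mem_insert_iff.mp hu with h | h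
        · rw [h, lca_comm T a m, lca_eq_left T hma]
          exact Set.mem_insert_of_mem a (Set.mem_insert m Cs)
        · exact Set.mem_insert_of_mem a (haA u h)
      have step2 : ∀ u ∈ insert m Cs, ∀ v ∈ insert m Cs, T.lca u v ∈ K := by
        intro u hu v hv
        rcases Set.mem_insert_iff.mp hu with h1 | h1
        · rcases Set.mem_insert_iff.mp hv with h2 | h2
          · rw [h1, h2, lca_self T m]
            exact Set.mem_insert_of_mem a (Set.mem_insert m Cs)
          · rw [h1]; exact Set.mem_insert_of_mem a (haB v h2)
        · rcases Set.mem_insert_iff.mp hv with h2 | h2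
          · rw [h2, lca_comm T u m]; exact Set.mem_insert_of_mem a (haB u h1)
          · exact Set.mem_insert_of_mem a
              (Set.mem_insert_of_mem m (lcaClosure_closed T _ u h1 v h2))
      intro x hx y hy
      rcases Set.mem_insert_iff.mp hx with h | hx2
      · rcases Set.mem_insert_iff.mp hy with h' | hy2
        · rw [h, h', lca_self T a]; exact Set.mem_insert a _
        · rw [h]; exact step y hy2
      · rcases Set.mem_insert_iff.mp hy with h' | hy2
        · rw [h', lca_comm T x a]; exact step x hx2
        · exact step2 x hx2 y hy2
    have hsub : lcaClosure T ↑(Finset.cons a s ha) ⊆ K := by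
      apply lcaClosure_min T _ hKclosed
      intro x hx
      rw [Finset.coe_cons, Set.mem_insert_iff] at hx
      rcases hx with h | h
      · rw [h]; exact Set.mem_insert a _
      · exact Set.mem_insert_of_mem a (Set.mem_insert_of_mem m (subset_lcaClosure T _ h))
    have h1 : (lcaClosure T ↑(Finset.cons a s ha)).ncard ≤ K.ncard :=
      Set.ncard_le_ncard hsub (Set.toFinite _)
    have h2 : K.ncard ≤ Cs.ncard + 2 := by
      show (insert a (insert m Cs)).ncard ≤ Cs.ncard + 2
      have i1 := Set.ncard_insert_le a (insert m Cs)
      have i2 := Set.ncard_insert_le m Cs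
      omega
    have h3 : 1 ≤ Cs.ncard := (Set.ncard_pos hCsfin).mpr hCsne
    have h4 : 1 ≤ s.card := hs.card_pos
    rw [Finset.card_cons]
    omega

lemma closure_ncard (S : Set V) (hS : S.Nonempty) :
    (lcaClosure T S).ncard ≤ 2 * S.ncard - 1 := by
  have hfin : S.Finite := Set.toFinite S
  have hc : (hfin.toFinset : Set V) = S := hfin.coe_toFinset
  have hne : hfin.toFinset.Nonempty := by
    rw [← Finset.coe_nonempty, hc]; exact hS
  have := closure_ncard_finset T hfin.toFinset hne
  rw [hc] at this
  rwa [← Set.ncard_coe_finset hfin.toFinset, hc] at this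

end MyAux

/-- Let `T` be a rooted tree on `n` nodes whose leaves are enumerated
left-to-right as `ℓ 0, …, ℓ (L-1)`.  Group the leaves into `⌈L/g⌉` consecutive blocks of
`g` leaves each (the last one possibly smaller), mark the LCA of each block, and close
the marked set under pairwise LCA.  Then `L ≤ n` and the number of marked nodes is at
most `2⌈L/g⌉ - 1 = O(n/g)`. -/
theorem marked_nodes_card_le {V : Type*} [Fintype V] (T : RTree V) (L g : ℕ)
    (hg : 1 ≤ g) (hL : 1 ≤ L) (ℓ : Fin L → V) (hinj : Function.Injective ℓ)
    (hleaf : ∀ v, T.IsLeaf v ↔ ∃ i, ℓ i = v) :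
    L ≤ Fintype.card V ∧
    (lcaClosure T {m : V | ∃ i : ℕ, i < (L + g - 1) / g ∧
        m = listLCA T (((List.finRange L).filter (fun j : Fin L => (j : ℕ) / g = i)).map ℓ)}).ncard
      ≤ 2 * ((L + g - 1) / g) - 1 := by
  constructor
  · simpa using Fintype.card_le_of_injective ℓ hinj
  · set B := (L + g - 1) / g with hBdef
    have hB : 1 ≤ B := (Nat.one_le_div_iff (by omega)).mpr (by omega)
    set f : ℕ → V := fun i =>
      listLCA T (((List.finRange L).filter (fun j : Fin L => (j : ℕ) / g = i)).map ℓ) with hf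
    set M : Set V := {m : V | ∃ i : ℕ, i < B ∧ m = f i} with hM
    have hMim : M = f '' ↑(Finset.range B) := by
      ext x
      simp only [hM, Set.mem_setOf_eq, Set.mem_image, Finset.coe_range, Set.mem_Iio]
      constructor
      · rintro ⟨i, h1, h2⟩; exact ⟨i, h1, h2.symm⟩
      · rintro ⟨i, h1, h2⟩; exact ⟨i, h1, h2.symm⟩
    have hMne : M.Nonempty := ⟨f 0, 0, hB, rfl⟩
    have hMcard : M.ncard ≤ B := by
      rw [hMim]
      calc (f '' ↑(Finset.range B)).ncard ≤ (↑(Finset.range B) : Set ℕ).ncard :=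
            Set.ncard_image_le (Set.toFinite _)
        _ = B := by rw [Set.ncard_coe_finset, Finset.card_range]
    have h1 := MyAux.closure_ncard T M hMne
    have h2 : 1 ≤ M.ncard := (Set.ncard_pos (Set.toFinite M)).mpr hMne
    omega
end

section
/- In a rooted tree, the set of nodes closed under pairwise LCA generated by a set S of m nodes has cardinality at most 2m − 1. -/
namespace RTree
variable {V : Type*} {T : RTree V}


lemma anc_refl (v : V) : T.Anc v v := ⟨0, rfl⟩

lemma anc_trans {u v w : V} (h1 : T.Anc u v) (h2 : T.Anc v w) : T.Anc u w := by
  obtain ⟨k, hk⟩ := h1; obtain ⟨j, hj⟩ := h2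
  exact ⟨k + j, by rw [Function.iterate_add_apply, hj, hk]⟩

lemma depth_parent_le (v : V) : T.depth (T.parent v) ≤ T.depth v := by
  by_cases h : v = T.root
  · rw [h, T.parent_root]
  · have := T.depth_parent v h; omega

lemma depth_iterate_le (k : ℕ) (v : V) : T.depth (T.parent^[k] v) ≤ T.depth v := by
  induction k with
  | zero => rfl
  | succ n ih =>
    rw [Function.iterate_succ_apply']
    exact le_trans (depth_parent_le _) ih

lemma depth_le_of_anc {u v : V} (h : T.Anc u v) : T.depth u ≤ T.depth v := by
  obtain ⟨k, hk⟩ := h; rw [← hk]; exact depth_iterate_le k v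

lemma eq_of_anc_depth_le {u v : V} (h : T.Anc u v) (hd : T.depth v ≤ T.depth u) : u = v := by
  obtain ⟨k, hk⟩ := h
  induction k generalizing v with
  | zero => exact hk.symm
  | succ n ih =>
    rw [Function.iterate_succ_apply] at hk
    by_cases hr : v = T.root
    · have hpv : T.parent v = v := by rw [hr]; exact T.parent_root
      rw [hpv] at hk
      exact ih hd hk
    · have h1 := T.depth_parent v hr
      have h2 : T.depth u ≤ T.depth (T.parent v) := by
        rw [← hk]; exact depth_iterate_le n (T.parent v)
      omega

lemma anc_antisymm {u v : V} (h1 : T.Anc u v) (h2 : T.Anc v u) : u = v :=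
  eq_of_anc_depth_le h1 (depth_le_of_anc h2)

lemma anc_lca_left (u v : V) : T.Anc (T.lca u v) u := T.lca_anc_left u v
lemma anc_lca_right (u v : V) : T.Anc (T.lca u v) v := T.lca_anc_right u v

lemma anc_lca {u v w : V} (h1 : T.Anc w u) (h2 : T.Anc w v) : T.Anc w (T.lca u v) :=
  T.lca_greatest u v w h1 h2

lemma anc_total {u v w : V} (h1 : T.Anc u w) (h2 : T.Anc v w) : T.Anc u v ∨ T.Anc v u := by
  obtain ⟨k, hk⟩ := h1; obtain ⟨j, hj⟩ := h2
  rcases le_total k j with h | h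
  · right
    exact ⟨j - k, by rw [← hk, ← Function.iterate_add_apply, Nat.sub_add_cancel h, hj]⟩
  · left
    exact ⟨k - j, by rw [← hj, ← Function.iterate_add_apply, Nat.sub_add_cancel h, hk]⟩

lemma lca_comm (u v : V) : T.lca u v = T.lca v u :=
  anc_antisymm (anc_lca (anc_lca_right u v) (anc_lca_left u v))
    (anc_lca (anc_lca_right v u) (anc_lca_left v u))

lemma lca_self (a : V) : T.lca a a = a :=
  anc_antisymm (anc_lca_left a a) (anc_lca (anc_refl a) (anc_refl a))

lemma lca_eq_left {x v : V} (h : T.Anc x v) : T.lca x v = x :=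
  anc_antisymm (anc_lca_left x v) (anc_lca (anc_refl x) h)



lemma subset_lcaClosure (S : Set V) : S ⊆ lcaClosure T S :=
  fun _ hx => Set.mem_sInter.2 fun _ hC => hC.1 hx

lemma lcaClosure_lca_mem {S : Set V} {a b : V} (ha : a ∈ lcaClosure T S)
    (hb : b ∈ lcaClosure T S) : T.lca a b ∈ lcaClosure T S :=
  Set.mem_sInter.2 fun C hC => hC.2 a (Set.mem_sInter.1 ha C hC) b (Set.mem_sInter.1 hb C hC)

lemma lcaClosure_min {S C : Set V} (h1 : S ⊆ C) (h2 : ∀ a ∈ C, ∀ b ∈ C, T.lca a b ∈ C) :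
    lcaClosure T S ⊆ C := fun _ hx => Set.mem_sInter.1 hx C ⟨h1, h2⟩

theorem lcaClosure_aux (T : RTree V) (S : Finset V) (hS : S.Nonempty) :
    (lcaClosure T (S : Set V)).Finite ∧ (lcaClosure T (S : Set V)).ncard ≤ 2 * S.card - 1 := by
  induction hS using Finset.Nonempty.cons_induction with
  | singleton a =>
    have hsub : lcaClosure T (({a} : Finset V) : Set V) ⊆ {a} := by
      apply lcaClosure_min
      · simp
      · intro x hx y hy
        simp only [Set.mem_singleton_iff] at hx hy ⊢
        rw [hx, hy, lca_self]
    constructor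
    · exact (Set.finite_singleton a).subset hsub
    · calc (lcaClosure T (({a} : Finset V) : Set V)).ncard ≤ ({a} : Set V).ncard :=
            Set.ncard_le_ncard hsub (Set.finite_singleton a)
        _ = 1 := Set.ncard_singleton a
        _ ≤ 2 * ({a} : Finset V).card - 1 := by simp
  | cons v s hvs hs ih =>
    obtain ⟨hfin, hcard⟩ := ih
    set C := lcaClosure T (s : Set V) with hCdef
    have hSsub : (s : Set V) ⊆ C := subset_lcaClosure _
    obtain ⟨w, hw⟩ := hs
    have hCne : C.Nonempty := ⟨w, hSsub (by exact_mod_cast hw)⟩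
    -- pick a deepest element among lca v c for c ∈ C
    obtain ⟨x, hxD, hxmax⟩ := Set.Finite.exists_maximalFor T.depth ((fun c => T.lca v c) '' C)
      (hfin.image _) (hCne.image _)
    obtain ⟨c₀, hc₀, hxeq⟩ := hxD
    have hxv : T.Anc x v := hxeq ▸ anc_lca_left v c₀
    have hxc₀ : T.Anc x c₀ := hxeq ▸ anc_lca_right v c₀
    have hdmax : ∀ c ∈ C, T.depth (T.lca v c) ≤ T.depth x := by
      intro c hc
      rcases le_or_gt (T.depth (T.lca v c)) (T.depth x) with h | h
      · exact h
      · have := hxmax (j := T.lca v c) ⟨c, hc, rfl⟩ (le_of_lt h)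
        omega
    have hanc_x : ∀ c ∈ C, T.Anc (T.lca v c) x := by
      intro c hc
      rcases anc_total (anc_lca_left v c) hxv with h | h
      · exact h
      · rw [eq_of_anc_depth_le h (hdmax c hc)]
        exact anc_refl _
    have keyL : ∀ c ∈ C, T.lca v c ∈ C ∪ {x} := by
      intro c hc
      by_cases he : T.lca v c = x
      · exact Or.inr he
      · left
        have hy : T.lca c₀ c ∈ C := lcaClosure_lca_mem hc₀ hc
        have h1 : T.Anc (T.lca v c) (T.lca c₀ c) :=
          anc_lca (anc_trans (hanc_x c hc) hxc₀) (anc_lca_right v c)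
        have h2 : T.Anc (T.lca c₀ c) (T.lca v c) := by
          rcases anc_total (anc_lca_left c₀ c) hxc₀ with h | h
          · exact anc_lca (anc_trans h hxv) (anc_lca_right c₀ c)
          · exact absurd (anc_antisymm (hanc_x c hc)
              (anc_lca hxv (anc_trans h (anc_lca_right c₀ c)))) he
        rw [anc_antisymm h1 h2]
        exact hy
    have keyLx : ∀ c ∈ C, T.lca x c = T.lca v c := by
      intro c hc
      exact anc_antisymm
        (anc_lca (anc_trans (anc_lca_left x c) hxv) (anc_lca_right x c))
        (anc_lca (hanc_x c hc) (anc_lca_right v c))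
    set E : Set V := C ∪ {v, x} with hEdef
    have hCE : C ∪ {x} ⊆ E := by
      intro a ha
      rcases ha with h | h
      · exact Or.inl h
      · exact Or.inr (Or.inr h)
    have hvE : v ∈ E := Or.inr (Or.inl rfl)
    have hxE : x ∈ E := Or.inr (Or.inr rfl)
    have hclosed : ∀ a ∈ E, ∀ b ∈ E, T.lca a b ∈ E := by
      have hlvb : ∀ b ∈ E, T.lca v b ∈ E := by
        intro b hb
        rcases hb with hb | hb | hb
        · exact hCE (keyL b hb)
        · rw [hb, lca_self]; exact hvE
        · rw [hb, lca_comm, lca_eq_left hxv]; exact hxE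
      have hlxb : ∀ b ∈ E, T.lca x b ∈ E := by
        intro b hb
        rcases hb with hb | hb | hb
        · rw [keyLx b hb]; exact hCE (keyL b hb)
        · rw [hb, lca_eq_left hxv]; exact hxE
        · rw [hb, lca_self]; exact hxE
      intro a ha b hb
      rcases ha with ha | ha | ha
      · rcases hb with hb | hb | hb
        · exact Or.inl (lcaClosure_lca_mem ha hb)
        · rw [hb, lca_comm]; exact hlvb a (Or.inl ha)
        · rw [hb, lca_comm]; exact hlxb a (Or.inl ha)
      · rw [ha]; exact hlvb b hb
      · rw [ha]; exact hlxb b hb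
    have hsub : lcaClosure T ((Finset.cons v s hvs : Finset V) : Set V) ⊆ E := by
      apply lcaClosure_min _ hclosed
      rw [Finset.coe_cons]
      intro a ha
      rcases ha with ha | ha
      · rw [ha]; exact hvE
      · exact Or.inl (hSsub ha)
    have hEfin : E.Finite := hfin.union ((Set.finite_singleton x).insert v)
    constructor
    · exact hEfin.subset hsub
    · have h1 : (lcaClosure T ((Finset.cons v s hvs : Finset V) : Set V)).ncard ≤ E.ncard :=
        Set.ncard_le_ncard hsub hEfin
      have h2 : E.ncard ≤ C.ncard + ({v, x} : Set V).ncard := Set.ncard_union_le _ _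
      have h3 : ({v, x} : Set V).ncard ≤ 2 := by
        calc ({v, x} : Set V).ncard ≤ ({x} : Set V).ncard + 1 := Set.ncard_insert_le _ _
          _ = 2 := by rw [Set.ncard_singleton]
      have h4 : 1 ≤ s.card := Finset.card_pos.2 ⟨w, hw⟩
      rw [Finset.card_cons]
      omega

end RTree

/-- In a rooted tree, the LCA-closure of a nonempty set `S` of `m`
nodes has cardinality at most `2 m - 1`. -/
theorem lcaClosure_card_le {V : Type*} (T : RTree V) (S : Finset V) (hS : S.Nonempty) :
    (lcaClosure T (S : Set V)).ncard ≤ 2 * S.card - 1 :=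
  (RTree.lcaClosure_aux T S hS).2
end

section
/- Given an array A[1..n] and t non-overlapping ranges, consider the conceptual max-heap built as follows: a balanced binary tree with t leaves at the top where internal nodes hold +∞, the i-th leaf holds the maximum of A over the i-th range, and below each node holding the maximum A[M] of range [L,R], its left child holds max of A[L..M−1] and right child holds max of A[M+1..R] (recursively). Then this structure satisfies the max-heap property, and its non-infinite node values are exactly the multiset of values A[L_1..R_1] ∪ ... ∪ A[L_t..R_t]. -/
/-- A (finite) binary tree in which every node holds a value. -/
inductive BHeap (α : Type*) where
  | nil : BHeap α
  | node (v : α) (l r : BHeap α) : BHeap α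

namespace BHeap

variable {α : Type*}

/-- The multiset of values held by the nodes. -/
def vals : BHeap α → Multiset α
  | nil => 0
  | node v l r => v ::ₘ (vals l + vals r)

/-- The number of nodes. -/
def size : BHeap α → ℕ
  | nil => 0
  | node _ l r => 1 + size l + size r

/-- The root value (if any) is at most `x`. -/
def rootLe [LE α] (x : α) : BHeap α → Prop
  | nil => True
  | node v _ _ => v ≤ x

/-- The max-heap property: every node's value is `≥` the values of its children. -/
def IsHeap [LE α] : BHeap α → Prop
  | nil => True
  | node v l r => rootLe v l ∧ rootLe v r ∧ IsHeap l ∧ IsHeap r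

/-- `Pruned p h`: `p` is a subtree of `h` containing the root of `h`, i.e. `p` is
obtained from `h` by replacing some subtrees by `nil`.  Such `p` are exactly the
connected sets of nodes of `h` containing the root. -/
inductive Pruned : BHeap α → BHeap α → Prop
  | nil (h : BHeap α) : Pruned nil h
  | node (v : α) {l r l' r' : BHeap α} :
      Pruned l' l → Pruned r' r → Pruned (node v l' r') (node v l r)

end BHeap

open BHeap

/-- The conceptual heap of the half-open range `[L, R)` of the array `A`: the root
holds the maximum `A (M L R)` (where `M` is a position-of-maximum oracle, clamped into
the range for definiteness), the left child is the heap of `[L, M L R)` and the right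
child is the heap of `[M L R + 1, R)`. -/
def rangeHeap (A : ℕ → ℝ) (M : ℕ → ℕ → ℕ) (L R : ℕ) : BHeap (WithTop ℝ) :=
  if h : L < R then
    let m := min (max (M L R) L) (R - 1)
    BHeap.node (↑(A m)) (rangeHeap A M L m) (rangeHeap A M (m + 1) R)
  else BHeap.nil
termination_by R - L
decreasing_by
  all_goals
    have h1 : min (max (M L R) L) (R - 1) ≤ R - 1 := min_le_right _ _
    have h2 : L ≤ min (max (M L R) L) (R - 1) := le_min (le_max_right _ _) (by omega)
    omega

/-- The conceptual heap for a list of (closed) ranges: a balanced binary tree whose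
`t - 1` internal nodes hold `+∞` and whose `i`-th leaf is the conceptual heap of the
`i`-th range. -/
def topHeap (A : ℕ → ℝ) (M : ℕ → ℕ → ℕ) : List (ℕ × ℕ) → BHeap (WithTop ℝ)
  | [] => BHeap.nil
  | [p] => rangeHeap A M p.1 (p.2 + 1)
  | p :: q :: rest =>
    BHeap.node ⊤
      (topHeap A M ((p :: q :: rest).take ((p :: q :: rest).length / 2)))
      (topHeap A M ((p :: q :: rest).drop ((p :: q :: rest).length / 2)))
termination_by l => l.length
decreasing_by
  all_goals simp [List.length_take, List.length_drop]; omega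


section Aux

variable {A : ℕ → ℝ} {M : ℕ → ℕ → ℕ}
lemma m_eq (hM : ∀ L R, L < R → L ≤ M L R ∧ M L R < R ∧ ∀ i, L ≤ i → i < R → A i ≤ A (M L R)) {L R : ℕ} (h : L < R) : min (max (M L R) L) (R - 1) = M L R := by
  obtain ⟨h1, h2, -⟩ := hM L R h; omega

lemma rootLe_top (h : BHeap (WithTop ℝ)) : h.rootLe ⊤ := by
  cases h with
  | nil => trivial
  | node v l r => exact le_top

lemma rangeHeap_rootLe (L R : ℕ) (x : WithTop ℝ)
    (hx : ∀ i, L ≤ i → i < R → (A i : WithTop ℝ) ≤ x) :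
    (rangeHeap A M L R).rootLe x := by
  rw [rangeHeap]
  split
  · next h => exact hx _ (le_min (le_max_right _ _) (by omega)) (by omega)
  · trivial

lemma rangeHeap_spec (hM : ∀ L R, L < R → L ≤ M L R ∧ M L R < R ∧ ∀ i, L ≤ i → i < R → A i ≤ A (M L R)) (n : ℕ) : ∀ L R, R - L ≤ n →
    (rangeHeap A M L R).IsHeap ∧
    (rangeHeap A M L R).vals = (Finset.Ico L R).val.map (fun i => ((A i : WithTop ℝ))) := by
  induction n with
  | zero =>
    intro L R hn
    rw [rangeHeap]
    have : ¬ L < R := by omega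
    simp only [this, dif_neg, not_false_iff]
    constructor
    · trivial
    · rw [BHeap.vals, Finset.Ico_eq_empty (by omega)]
      simp
  | succ n ih =>
    intro L R hn
    rw [rangeHeap]
    by_cases h : L < R
    · simp only [h, dif_pos]
      rw [m_eq hM h]
      obtain ⟨h1, h2, h3⟩ := hM L R h
      set m := M L R with hm
      have hL := ih L m (by omega)
      have hR := ih (m + 1) R (by omega)
      refine ⟨⟨?_, ?_, hL.1, hR.1⟩, ?_⟩
      · exact rangeHeap_rootLe L m _ fun i hi hi' =>
          WithTop.coe_le_coe.mpr (h3 i hi (by omega))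
      · exact rangeHeap_rootLe (m + 1) R _ fun i hi hi' =>
          WithTop.coe_le_coe.mpr (h3 i (by omega) hi')
      · rw [BHeap.vals, hL.2, hR.2]
        have hval : (Finset.Ico L R).val =
            m ::ₘ ((Finset.Ico L m).val + (Finset.Ico (m + 1) R).val) := by
          have hd : Disjoint (Finset.Ico L m) (Finset.Ico (m + 1) R) := by
            rw [Finset.disjoint_left]
            intro a ha ha'
            simp only [Finset.mem_Ico] at ha ha'
            omega
          have heq : Finset.Ico L R = insert m (Finset.Ico L m ∪ Finset.Ico (m + 1) R) := by
            ext x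
            simp only [Finset.mem_Ico, Finset.mem_insert, Finset.mem_union]
            omega
          rw [heq, Finset.insert_val_of_notMem (by
              simp only [Finset.mem_union, Finset.mem_Ico]; omega),
            ← Finset.disjUnion_eq_union _ _ hd]
          rfl
        rw [hval, Multiset.map_cons, Multiset.map_add]
    · simp only [h, dif_neg, not_false_iff]
      constructor
      · trivial
      · rw [BHeap.vals, Finset.Ico_eq_empty h]
        simp

lemma topHeap_spec (hM : ∀ L R, L < R → L ≤ M L R ∧ M L R < R ∧ ∀ i, L ≤ i → i < R → A i ≤ A (M L R)) (l : List (ℕ × ℕ)) :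
    (topHeap A M l).IsHeap ∧
    (topHeap A M l).vals =
      Multiset.replicate (l.length - 1) (⊤ : WithTop ℝ) +
        (l.map (fun p =>
          (Finset.Icc p.1 p.2).val.map (fun i => ((A i : WithTop ℝ))))).sum := by
  induction l using topHeap.induct with
  | case1 =>
    simp [topHeap, BHeap.vals, BHeap.IsHeap]
  | case2 p =>
    have h := rangeHeap_spec hM (p.2 + 1 - p.1) p.1 (p.2 + 1) le_rfl
    rw [topHeap]
    refine ⟨h.1, ?_⟩
    rw [h.2, Finset.Ico_add_one_right_eq_Icc]
    simp
  | case3 p q rest ih1 ih2 =>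
    rw [topHeap]
    set l := p :: q :: rest with hl
    set k := l.length / 2 with hk
    have hlen : l.length = rest.length + 2 := by simp [hl]
    have hk1 : 1 ≤ k := by omega
    have hk2 : k < l.length := by omega
    refine ⟨⟨rootLe_top _, rootLe_top _, ih1.1, ih2.1⟩, ?_⟩
    rw [BHeap.vals, ih1.2, ih2.2]
    have htl : (l.take k).length = k := by
      rw [List.length_take]; omega
    have hdl : (l.drop k).length = l.length - k := by
      rw [List.length_drop]
    rw [htl, hdl]
    have hsum : (l.map (fun p =>
          (Finset.Icc p.1 p.2).val.map (fun i => ((A i : WithTop ℝ))))).sum =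
        ((l.take k).map (fun p =>
          (Finset.Icc p.1 p.2).val.map (fun i => ((A i : WithTop ℝ))))).sum +
        ((l.drop k).map (fun p =>
          (Finset.Icc p.1 p.2).val.map (fun i => ((A i : WithTop ℝ))))).sum := by
      conv_lhs => rw [← List.take_append_drop k l]
      rw [List.map_append, List.sum_append]
    rw [hsum]
    have hrep : Multiset.replicate (l.length - 1) (⊤ : WithTop ℝ) =
        (⊤ : WithTop ℝ) ::ₘ (Multiset.replicate (k - 1) (⊤ : WithTop ℝ) +
          Multiset.replicate (l.length - k - 1) (⊤ : WithTop ℝ)) := by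
      rw [← Multiset.replicate_add]
      have : l.length - 1 = 1 + ((k - 1) + (l.length - k - 1)) := by omega
      rw [this, Multiset.replicate_add, Multiset.replicate_one, Multiset.singleton_add]
    rw [hrep]
    rw [Multiset.cons_add, Multiset.cons_inj_right]
    abel

end Aux

/-- If `M` returns a position of maximum of `A` on each half-open
range, and the given closed ranges `[Lᵢ, Rᵢ]` are nonempty and pairwise disjoint, then
the conceptual heap satisfies the max-heap property, and its multiset of values
consists of the `t - 1` copies of `+∞` together with exactly the entries of `A` over
the union of the ranges. -/
theorem conceptualHeap_isHeap_and_vals (A : ℕ → ℝ) (M : ℕ → ℕ → ℕ)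
    (hM : ∀ L R, L < R → L ≤ M L R ∧ M L R < R ∧ ∀ i, L ≤ i → i < R → A i ≤ A (M L R))
    (ranges : List (ℕ × ℕ)) (hne : ∀ p ∈ ranges, p.1 ≤ p.2)
    (hdisj : ranges.Pairwise (fun p q => p.2 < q.1 ∨ q.2 < p.1)) :
    (topHeap A M ranges).IsHeap ∧
    (topHeap A M ranges).vals =
      Multiset.replicate (ranges.length - 1) (⊤ : WithTop ℝ) +
        (ranges.map (fun p =>
          (Finset.Icc p.1 p.2).val.map (fun i => ((A i : WithTop ℝ))))).sum := by
  exact topHeap_spec hM ranges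
end
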